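/- arXiv:2002.11865 — 3 statements merged into one kernel-verified Lean document; each statement's English description precedes it below -/
import Mathlib

section
/- For every integrable random variable X on a nonatomic probability space, there exists a sequence of finite measurable partitions (π_n) of Ω (each member having positive probability) and a constant k ≥ 0 such that E[X|π_n] → X almost surely and |E[X|π_n]| ≤ |X| + k almost surely for all n. -/
open MeasureTheory Filter Topology

variable {Ω : Type*} [MeasurableSpace Ω]

/-- A finite measurable partition of `Ω` whose members have positive measure. -/
structure FinPartition (μ : Measure Ω) where
  parts : Finset (Set Ω)
  measSet : ∀ A ∈ parts, MeasurableSet A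
  pairwiseDisj : ∀ A ∈ parts, ∀ B ∈ parts, A ≠ B → Disjoint A B
  cover : ⋃ A ∈ parts, A = Set.univ
  pos : ∀ A ∈ parts, 0 < μ A

/-- Conditional expectation of `X` with respect to the finite partition `π`:
`E[X|π] = ∑_{A ∈ π} (∫_A X dμ / μ(A)) 1_A`. -/
noncomputable def pCondExp (μ : Measure Ω) (π : FinPartition μ) (X : Ω → ℝ) : Ω → ℝ :=
  fun ω => ∑ A ∈ π.parts, Set.indicator A (fun _ => (∫ x in A, X x ∂μ) / (μ A).toReal) ω

/-- A simple random variable. -/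
def IsSimpleRV (X : Ω → ℝ) : Prop := Measurable X ∧ (Set.range X).Finite

/-- Membership in the smallest ideal of `L¹` generated by `S`. -/
def MemIdeal (μ : Measure Ω) (S : Set (Ω → ℝ)) (X : Ω → ℝ) : Prop :=
  ∃ (n : ℕ) (Y : Fin n → Ω → ℝ) (l : Fin n → ℝ),
    (∀ i, Y i ∈ S) ∧ (∀ i, 0 ≤ l i) ∧ ∀ᵐ ω ∂μ, |X ω| ≤ ∑ i, l i * |Y i ω|

/-- Dilatation monotonicity of `ρ` on `𝓧`. -/
def DilMono (μ : Measure Ω) (𝓧 : Set (Ω → ℝ)) (ρ : (Ω → ℝ) → EReal) : Prop :=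
  ∀ X ∈ 𝓧, ∀ π : FinPartition μ, ρ (pCondExp μ π X) ≤ ρ X

/-- The Fatou property of `ρ` on `𝓧`. -/
def FatouProp (μ : Measure Ω) (𝓧 : Set (Ω → ℝ)) (ρ : (Ω → ℝ) → EReal) : Prop :=
  ∀ (Xn : ℕ → Ω → ℝ) (X : Ω → ℝ), (∀ n, Xn n ∈ 𝓧) → X ∈ 𝓧 →
    (∀ᵐ ω ∂μ, Tendsto (fun n => Xn n ω) atTop (nhds (X ω))) →
    (∃ Y, MemIdeal μ 𝓧 Y ∧ ∀ᵐ ω ∂μ, ∀ n, |Xn n ω| ≤ Y ω) →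
    ρ X ≤ liminf (fun n => ρ (Xn n)) atTop

/-- Convergence of a net in the `σ(L¹, 𝓛)` topology. -/
def TendstoWeakSimple (μ : Measure Ω) {ι : Type*} (l : Filter ι)
    (Xn : ι → Ω → ℝ) (X : Ω → ℝ) : Prop :=
  ∀ Z : Ω → ℝ, IsSimpleRV Z →
    Tendsto (fun i => ∫ ω, Xn i ω * Z ω ∂μ) l (nhds (∫ ω, X ω * Z ω ∂μ))

/-- The extension `ρ̄(X) = sup_{π ∈ Π} ρ(E[X|π])`. -/
noncomputable def rhoBar (μ : Measure Ω) (ρ : (Ω → ℝ) → EReal) (X : Ω → ℝ) : EReal :=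
  ⨆ π : FinPartition μ, ρ (pCondExp μ π X)

/-- The conjugate `ρ^#(Y) = sup_{X ∈ 𝓛} { E[XY] - ρ(X) }`. -/
noncomputable def sharp (μ : Measure Ω) (ρ : (Ω → ℝ) → EReal) (Y : Ω → ℝ) : EReal :=
  ⨆ X : {X : Ω → ℝ // IsSimpleRV X}, (((∫ ω, X.1 ω * Y ω ∂μ : ℝ) : EReal) - ρ X.1)

section Stmt0Aux

variable {μ : Measure Ω}

lemma pCondExp_apply_of_mem (π : FinPartition μ) (X : Ω → ℝ)
    {A : Set Ω} (hA : A ∈ π.parts) {ω : Ω} (hω : ω ∈ A) :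
    pCondExp μ π X ω = (∫ x in A, X x ∂μ) / (μ A).toReal := by
  have h := Finset.sum_eq_single_of_mem (s := π.parts)
    (f := fun B => Set.indicator B (fun _ => (∫ x in B, X x ∂μ) / (μ B).toReal) ω) A hA
    (fun B hB hBA => Set.indicator_of_notMem
      (fun hωB => Set.disjoint_left.mp (π.pairwiseDisj B hB A hA hBA) hωB hω) _)
  simp only [pCondExp]
  rw [h]
  simp only [Set.indicator_of_mem hω]

lemma pCondExp_congr_ae (π : FinPartition μ) {X Y : Ω → ℝ} (h : X =ᵐ[μ] Y) :
    pCondExp μ π X = pCondExp μ π Y := by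
  funext ω
  simp only [pCondExp]
  refine Finset.sum_congr rfl fun A hA => ?_
  have hXY : (∫ x in A, X x ∂μ) = ∫ x in A, Y x ∂μ :=
    setIntegral_congr_ae (π.measSet A hA) (h.mono fun x hx _ => hx)
  rw [hXY]

lemma abs_avg_sub_le {A : Set Ω} (h0 : μ A ≠ 0) (hfin : μ A ≠ ⊤)
    {X : Ω → ℝ} (hX : IntegrableOn X A μ) {r C : ℝ}
    (hC : |∫ x in A, (X x - r) ∂μ| ≤ C * (μ A).toReal) :
    |(∫ x in A, X x ∂μ) / (μ A).toReal - r| ≤ C := by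
  have hpos : 0 < (μ A).toReal := ENNReal.toReal_pos h0 hfin
  have hsub : ∫ x in A, (X x - r) ∂μ = (∫ x in A, X x ∂μ) - r * (μ A).toReal := by
    rw [integral_sub hX (integrableOn_const hfin), setIntegral_const,
      smul_eq_mul, measureReal_def]
    ring
  have heq : (∫ x in A, X x ∂μ) / (μ A).toReal - r
      = (∫ x in A, (X x - r) ∂μ) / (μ A).toReal := by
    rw [hsub, sub_div, mul_div_assoc, div_self hpos.ne', mul_one]
  rw [heq, abs_div, abs_of_pos hpos, div_le_iff₀ hpos]
  exact hC

end Stmt0Aux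

set_option maxHeartbeats 1000000 in
lemma stmt0_key (μ : Measure Ω) [IsProbabilityMeasure μ] (X : Ω → ℝ) (hm : Measurable X)
    (hint : Integrable X μ) (c : ℕ) (hc : μ {ω | |X ω| ≤ (c : ℝ)} ≠ 0) (n : ℕ) :
    ∃ (π : FinPartition μ) (N : Set Ω), μ N = 0 ∧
      (∀ ω, |pCondExp μ π X ω| ≤ |X ω| + ((c : ℝ) + 3)) ∧
      (∀ ω, ω ∉ N → |X ω| ≤ (n : ℝ) → |pCondExp μ π X ω - X ω| ≤ 2 * ((2 : ℝ) ^ n)⁻¹) := by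
  classical
  set w : ℝ := ((2 : ℝ) ^ n)⁻¹ with hw_def
  have hw0 : 0 < w := by positivity
  have hw1 : w ≤ 1 := by
    rw [hw_def]
    have h1 : (1 : ℝ) ≤ 2 ^ n := one_le_pow₀ (by norm_num)
    rw [inv_le_one_iff₀]
    right; exact h1
  have hw2 : w * (2 : ℝ) ^ n = 1 := by
    rw [hw_def]; field_simp
  -- level sets
  set S : ℤ → Set Ω := fun j => {ω | (j : ℝ) * w ≤ X ω ∧ X ω < ((j : ℝ) + 1) * w} with hS_def
  have hSmeas : ∀ j, MeasurableSet (S j) := fun j => hm measurableSet_Ico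
  have hSdisj : ∀ j j' : ℤ, j ≠ j' → Disjoint (S j) (S j') := by
    intro j j' hne
    rw [Set.disjoint_left]
    intro ω hj hj'
    rcases lt_or_gt_of_ne hne with h | h
    · have h1 : ((j : ℝ) + 1) ≤ (j' : ℝ) := by exact_mod_cast h
      nlinarith [hj.2, hj'.1, hw0]
    · have h1 : ((j' : ℝ) + 1) ≤ (j : ℝ) := by exact_mod_cast h
      nlinarith [hj.1, hj'.2, hw0]
  have hmem : ∀ ω : Ω, ω ∈ S ⌊X ω * (2 : ℝ) ^ n⌋ := by
    intro ω
    have h2n : (0 : ℝ) < (2 : ℝ) ^ n := by positivity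
    have h1 : (⌊X ω * (2 : ℝ) ^ n⌋ : ℝ) ≤ X ω * (2 : ℝ) ^ n := Int.floor_le _
    have h2 : X ω * (2 : ℝ) ^ n < (⌊X ω * (2 : ℝ) ^ n⌋ : ℝ) + 1 := Int.lt_floor_add_one _
    have h4 : X ω * 2 ^ n * w = X ω := by
      rw [hw_def]; field_simp
    constructor
    · have h3 := mul_le_mul_of_nonneg_right h1 hw0.le
      linarith
    · have h3 := mul_lt_mul_of_pos_right h2 hw0
      linarith
  have hfloor_mem : ∀ (m : ℕ) (ω : Ω), |X ω| ≤ (m : ℝ) →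
      ⌊X ω * (2 : ℝ) ^ n⌋ ∈ Finset.Icc (-(((m : ℤ) + 1) * 2 ^ n)) (((m : ℤ) + 1) * 2 ^ n - 1) := by
    intro m ω hωm
    rw [Finset.mem_Icc]
    have habs := abs_le.mp hωm
    have h2n : (0 : ℝ) < (2 : ℝ) ^ n := by positivity
    constructor
    · rw [Int.le_floor]
      push_cast
      nlinarith [habs.1]
    · rw [Int.le_sub_one_iff, Int.floor_lt]
      push_cast
      nlinarith [habs.2]
  -- choice of j₀
  set J₀ : Finset ℤ := Finset.Icc (-(((c : ℤ) + 1) * 2 ^ n)) (((c : ℤ) + 1) * 2 ^ n - 1)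
    with hJ₀_def
  have hex : ∃ j ∈ J₀, μ (S j) ≠ 0 := by
    by_contra h
    push_neg at h
    apply hc
    refine measure_mono_null (fun ω hω => ?_)
      ((measure_biUnion_null_iff (J₀ : Set ℤ).to_countable).mpr
        (fun j hj => h j (Finset.mem_coe.mp hj)))
    exact Set.mem_biUnion (Finset.mem_coe.mpr (hfloor_mem c ω hω)) (hmem ω)
  obtain ⟨j₀, hj₀J₀, hj₀pos⟩ := hex
  have hj₀bounds : (-(((c : ℝ) + 1) * 2 ^ n)) ≤ (j₀ : ℝ) ∧ (j₀ : ℝ) + 1 ≤ ((c : ℝ) + 1) * 2 ^ n := by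
    rw [hJ₀_def, Finset.mem_Icc] at hj₀J₀
    constructor
    · exact_mod_cast hj₀J₀.1
    · have := Int.lt_iff_add_one_le.mp (Int.lt_of_le_sub_one hj₀J₀.2)
      exact_mod_cast this
  have hSj₀_bound : ∀ x ∈ S j₀, |X x| ≤ (c : ℝ) + 1 := by
    intro x hx
    rw [abs_le]
    constructor
    · nlinarith [hx.1, hj₀bounds.1, hw0, hw2]
    · nlinarith [hx.2, hj₀bounds.2, hw0, hw2]
  have hj₀w_bound : |(j₀ : ℝ) * w| ≤ (c : ℝ) + 1 := by
    rw [abs_le]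
    constructor
    · nlinarith [hj₀bounds.1, hw0, hw2]
    · nlinarith [hj₀bounds.2, hw0, hw2]
  -- tail sets
  set T : ℕ → Set Ω := fun m => {ω | (m : ℝ) < |X ω|} with hT_def
  have hTmeas : ∀ m, MeasurableSet (T m) := fun m => measurableSet_lt measurable_const hm.abs
  have hTanti : Antitone T := by
    intro m m' hmm' ω hω
    have hω' : (m' : ℝ) < |X ω| := hω
    show (m : ℝ) < |X ω|
    exact lt_of_le_of_lt (Nat.cast_le.mpr hmm') hω'
  have hTinter : ⋂ m, T m = ∅ := by
    ext ω
    simp only [Set.mem_iInter, Set.mem_empty_iff_false, iff_false, not_forall]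
    obtain ⟨m, hm'⟩ := exists_nat_ge (|X ω|)
    exact ⟨m, not_lt.mpr hm'⟩
  have hTtend : Tendsto (fun m => μ (T m)) atTop (𝓝 0) := by
    have h := tendsto_measure_iInter_atTop (fun m => (hTmeas m).nullMeasurableSet) hTanti
      ⟨0, measure_ne_top μ _⟩
    rw [hTinter, measure_empty] at h
    exact h
  have hItend : Tendsto (fun m => ∫ x in T m, |X x| ∂μ) atTop (𝓝 0) :=
    hint.abs.tendsto_setIntegral_nhds_zero hTtend
  have hμtend : Tendsto (fun m => (μ (T m)).toReal) atTop (𝓝 0) := by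
    have h := (ENNReal.tendsto_toReal (a := 0) (by simp)).comp hTtend
    exact h
  set βr : ℝ := (μ (S j₀)).toReal with hβr_def
  have hβrpos : 0 < βr := ENNReal.toReal_pos hj₀pos (measure_ne_top μ _)
  have hFtend : Tendsto (fun m => (∫ x in T m, |X x| ∂μ) + ((c : ℝ) + 2) * (μ (T m)).toReal)
      atTop (𝓝 0) := by
    have h := hItend.add (hμtend.const_mul ((c : ℝ) + 2))
    simpa using h
  have hev : ∀ᶠ m in atTop,
      (∫ x in T m, |X x| ∂μ) + ((c : ℝ) + 2) * (μ (T m)).toReal ≤ w * βr :=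
    (hFtend.eventually_lt_const (by positivity)).mono fun m h => h.le
  obtain ⟨a, han, hac, haF⟩ :
      ∃ a : ℕ, n ≤ a ∧ c + 1 ≤ a ∧
        (∫ x in T a, |X x| ∂μ) + ((c : ℝ) + 2) * (μ (T a)).toReal ≤ w * βr := by
    obtain ⟨a, h1, h2, h3⟩ := ((eventually_ge_atTop n).and ((eventually_ge_atTop (c + 1)).and
      hev)).exists
    exact ⟨a, h1, h2, h3⟩
  set J : Finset ℤ := Finset.Icc (-(((a : ℤ) + 1) * 2 ^ n)) (((a : ℤ) + 1) * 2 ^ n - 1) with hJ_def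
  have hJ₀J : J₀ ⊆ J := by
    have hca : ((c : ℤ) + 1) * 2 ^ n ≤ ((a : ℤ) + 1) * 2 ^ n := by
      have h1 : (c : ℤ) + 1 ≤ (a : ℤ) + 1 := by exact_mod_cast Nat.le_succ_of_le hac
      exact mul_le_mul_of_nonneg_right h1 (by positivity)
    rw [hJ₀_def, hJ_def]
    exact Finset.Icc_subset_Icc (by omega) (by omega)
  set PosJ' : Finset ℤ := (J.erase j₀).filter (fun j => μ (S j) ≠ 0) with hPosJ'_def
  set G : Set Ω := (⋃ j ∈ PosJ', S j)ᶜ with hG_def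
  have hGmeas : MeasurableSet G :=
    (Finset.measurableSet_biUnion PosJ' fun j _ => hSmeas j).compl
  have hGdisjS : ∀ j ∈ PosJ', Disjoint G (S j) := by
    intro j hj
    rw [hG_def, Set.disjoint_left]
    intro ω hω hωS
    exact hω (Set.mem_biUnion hj hωS)
  have hSj₀G : S j₀ ⊆ G := by
    intro ω hω
    rw [hG_def, Set.mem_compl_iff]
    intro hmem'
    simp only [Set.mem_iUnion] at hmem'
    obtain ⟨j, hjP, hωj⟩ := hmem'
    have hjne : j ≠ j₀ := Finset.ne_of_mem_erase (Finset.mem_of_mem_filter j hjP)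
    exact Set.disjoint_left.mp (hSdisj j j₀ hjne) hωj hω
  have hGpos0 : μ G ≠ 0 := fun h => hj₀pos (measure_mono_null hSj₀G h)
  set Nn : Set Ω := ⋃ j ∈ J.filter (fun j => μ (S j) = 0), S j with hNn_def
  have hNn : μ Nn = 0 := by
    rw [hNn_def]
    refine (measure_biUnion_null_iff ((J.filter fun j => μ (S j) = 0) : Set ℤ).to_countable).mpr
      (fun j hj => ?_)
    exact (Finset.mem_filter.mp (Finset.mem_coe.mp hj)).2
  have hGsub : G ⊆ T a ∪ (S j₀ ∪ Nn) := by
    intro ω hωG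
    by_cases hωa : |X ω| ≤ (a : ℝ)
    · right
      have hjJ : ⌊X ω * (2 : ℝ) ^ n⌋ ∈ J := by rw [hJ_def]; exact hfloor_mem a ω hωa
      by_cases hj0 : ⌊X ω * (2 : ℝ) ^ n⌋ = j₀
      · left; rw [← hj0]; exact hmem ω
      by_cases hnull : μ (S ⌊X ω * (2 : ℝ) ^ n⌋) = 0
      · right
        exact Set.mem_biUnion (Finset.mem_filter.mpr ⟨hjJ, hnull⟩) (hmem ω)
      · exfalso
        exact hωG (Set.mem_biUnion
          (Finset.mem_filter.mpr ⟨Finset.mem_erase.mpr ⟨hj0, hjJ⟩, hnull⟩) (hmem ω))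
    · left; exact lt_of_not_ge hωa
  -- build the partition
  have hmeasSet : ∀ A ∈ insert G (PosJ'.image S), MeasurableSet A := by
    intro A hA
    rcases Finset.mem_insert.mp hA with rfl | hA
    · exact hGmeas
    · obtain ⟨j, _, rfl⟩ := Finset.mem_image.mp hA
      exact hSmeas j
  have hdisj : ∀ A ∈ insert G (PosJ'.image S), ∀ B ∈ insert G (PosJ'.image S),
      A ≠ B → Disjoint A B := by
    intro A hA B hB hAB
    rcases Finset.mem_insert.mp hA with rfl | hA <;> rcases Finset.mem_insert.mp hB with rfl | hB
    · exact absurd rfl hAB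
    · obtain ⟨j, hj, rfl⟩ := Finset.mem_image.mp hB
      exact hGdisjS j hj
    · obtain ⟨j, hj, rfl⟩ := Finset.mem_image.mp hA
      exact (hGdisjS j hj).symm
    · obtain ⟨j, hj, rfl⟩ := Finset.mem_image.mp hA
      obtain ⟨j', hj', rfl⟩ := Finset.mem_image.mp hB
      exact hSdisj j j' (fun h => hAB (by rw [h]))
  have hcover : ⋃ A ∈ insert G (PosJ'.image S), A = Set.univ := by
    rw [Finset.set_biUnion_insert, Finset.set_biUnion_finset_image, hG_def]
    exact Set.compl_union_self _
  have hposparts : ∀ A ∈ insert G (PosJ'.image S), 0 < μ A := by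
    intro A hA
    rcases Finset.mem_insert.mp hA with rfl | hA
    · exact pos_iff_ne_zero.mpr hGpos0
    · obtain ⟨j, hj, rfl⟩ := Finset.mem_image.mp hA
      exact pos_iff_ne_zero.mpr (Finset.mem_filter.mp hj).2
  set π : FinPartition μ := ⟨insert G (PosJ'.image S), hmeasSet, hdisj, hcover, hposparts⟩
    with hπ_def
  -- Fact A : on parts S j
  have factA : ∀ j ∈ PosJ', ∀ ω ∈ S j, |pCondExp μ π X ω - X ω| ≤ w := by
    intro j hj ω hω
    have hA : S j ∈ π.parts := Finset.mem_insert_of_mem (Finset.mem_image_of_mem S hj)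
    rw [pCondExp_apply_of_mem π X hA hω]
    refine abs_avg_sub_le (Finset.mem_filter.mp hj).2 (measure_ne_top μ _)
      hint.integrableOn ?_
    rw [← Real.norm_eq_abs]
    refine norm_setIntegral_le_of_norm_le_const (measure_lt_top μ _)
      (fun x hx => ?_)
    rw [Real.norm_eq_abs, abs_sub_le_iff]
    exact ⟨by nlinarith [hx.2, hω.1], by nlinarith [hω.2, hx.1]⟩
  -- Fact B : on G
  have hGparts : G ∈ π.parts := Finset.mem_insert_self _ _
  have factB : ∀ r : ℝ, |r| ≤ (c : ℝ) + 2 → (∀ x ∈ S j₀, |X x - r| ≤ w) →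
      ∀ ω ∈ G, |pCondExp μ π X ω - r| ≤ 2 * w := by
    intro r hr hSr ω hω
    rw [pCondExp_apply_of_mem π X hGparts hω]
    refine abs_avg_sub_le hGpos0 (measure_ne_top μ _) hint.integrableOn ?_
    have hintsub : IntegrableOn (fun x => X x - r) G μ :=
      (hint.sub (integrable_const r)).integrableOn
    have hsplit : ∫ x in G, (X x - r) ∂μ
        = (∫ x in G ∩ T a, (X x - r) ∂μ) + ∫ x in G \ T a, (X x - r) ∂μ :=
      (integral_inter_add_diff (hTmeas a) hintsub).symm
    have hb1 : |∫ x in G ∩ T a, (X x - r) ∂μ| ≤ w * βr := by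
      have h1 : |∫ x in G ∩ T a, (X x - r) ∂μ| ≤ ∫ x in G ∩ T a, |X x - r| ∂μ := by
        rw [← Real.norm_eq_abs]
        exact (norm_integral_le_integral_norm _)
      have h2 : ∫ x in G ∩ T a, |X x - r| ∂μ
          ≤ ∫ x in G ∩ T a, (|X x| + ((c : ℝ) + 2)) ∂μ := by
        refine integral_mono ((hint.sub (integrable_const r)).abs.integrableOn)
          ((hint.abs.add (integrable_const _)).integrableOn) (fun x => ?_)
        have := abs_sub (X x) r
        linarith
      have h3 : ∫ x in G ∩ T a, (|X x| + ((c : ℝ) + 2)) ∂μ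
          = (∫ x in G ∩ T a, |X x| ∂μ) + ((c : ℝ) + 2) * (μ (G ∩ T a)).toReal := by
        rw [integral_add hint.abs.integrableOn (integrable_const _), setIntegral_const,
          smul_eq_mul, measureReal_def]
        ring
      have h4 : ∫ x in G ∩ T a, |X x| ∂μ ≤ ∫ x in T a, |X x| ∂μ :=
        setIntegral_mono_set hint.abs.integrableOn
          (Filter.Eventually.of_forall fun x => abs_nonneg _)
          (HasSubset.Subset.eventuallyLE Set.inter_subset_right)
      have h5 : (μ (G ∩ T a)).toReal ≤ (μ (T a)).toReal :=
        ENNReal.toReal_mono (measure_ne_top μ _) (measure_mono Set.inter_subset_right)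
      have hc2 : (0 : ℝ) ≤ (c : ℝ) + 2 := by positivity
      calc |∫ x in G ∩ T a, (X x - r) ∂μ|
          ≤ ∫ x in G ∩ T a, (|X x| + ((c : ℝ) + 2)) ∂μ := h1.trans h2
        _ = (∫ x in G ∩ T a, |X x| ∂μ) + ((c : ℝ) + 2) * (μ (G ∩ T a)).toReal := h3
        _ ≤ (∫ x in T a, |X x| ∂μ) + ((c : ℝ) + 2) * (μ (T a)).toReal := by nlinarith
        _ ≤ w * βr := haF
    have hb2 : |∫ x in G \ T a, (X x - r) ∂μ| ≤ w * (μ (G \ T a)).toReal := by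
      rw [← Real.norm_eq_abs]
      refine norm_setIntegral_le_of_norm_le_const_ae' (measure_lt_top μ _)
        ?_
      filter_upwards [measure_eq_zero_iff_ae_notMem.mp hNn] with x hxN hx
      rcases hGsub hx.1 with hT | hS
      · exact absurd hT hx.2
      rcases hS with hS | hN
      · rw [Real.norm_eq_abs]; exact hSr x hS
      · exact absurd hN hxN
    have hβG : βr ≤ (μ G).toReal :=
      ENNReal.toReal_mono (measure_ne_top μ _) (measure_mono hSj₀G)
    have hdG : (μ (G \ T a)).toReal ≤ (μ G).toReal :=
      ENNReal.toReal_mono (measure_ne_top μ _) (measure_mono Set.diff_subset)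
    calc |∫ x in G, (X x - r) ∂μ|
        ≤ |∫ x in G ∩ T a, (X x - r) ∂μ| + |∫ x in G \ T a, (X x - r) ∂μ| := by
          rw [hsplit]; exact abs_add_le _ _
      _ ≤ w * βr + w * (μ (G \ T a)).toReal := add_le_add hb1 hb2
      _ ≤ (2 * w) * (μ G).toReal := by nlinarith
  refine ⟨π, Nn, hNn, ?_, ?_⟩
  · -- uniform bound
    intro ω
    by_cases hωG : ω ∈ G
    · have hSr : ∀ x ∈ S j₀, |X x - (j₀ : ℝ) * w| ≤ w := by
        intro x hx
        rw [abs_sub_le_iff]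
        exact ⟨by nlinarith [hx.2], by nlinarith [hx.1]⟩
      have h := factB ((j₀ : ℝ) * w) (hj₀w_bound.trans (by linarith)) hSr ω hωG
      have htri : |pCondExp μ π X ω| ≤ |pCondExp μ π X ω - (j₀ : ℝ) * w| + |(j₀ : ℝ) * w| := by
        have := abs_add_le (pCondExp μ π X ω - (j₀ : ℝ) * w) ((j₀ : ℝ) * w)
        simpa using this
      have habs : (0 : ℝ) ≤ |X ω| := abs_nonneg _
      linarith
    · have hωU : ω ∈ ⋃ j ∈ PosJ', S j := by
        by_contra h
        exact hωG h
      simp only [Set.mem_iUnion] at hωU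
      obtain ⟨j, hj, hωS⟩ := hωU
      have h := factA j hj ω hωS
      have htri : |pCondExp μ π X ω| ≤ |pCondExp μ π X ω - X ω| + |X ω| := by
        have := abs_add_le (pCondExp μ π X ω - X ω) (X ω)
        simpa using this
      linarith
  · -- approximation
    intro ω hωN hωn
    by_cases hωG : ω ∈ G
    · rcases hGsub hωG with hT | hS
      · exfalso
        have h1 : (a : ℝ) < |X ω| := hT
        have h2 : (n : ℝ) ≤ (a : ℝ) := by exact_mod_cast han
        linarith
      rcases hS with hS | hN
      · have hrb : |X ω| ≤ (c : ℝ) + 2 := (hSj₀_bound ω hS).trans (by linarith)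
        have hSr : ∀ x ∈ S j₀, |X x - X ω| ≤ w := by
          intro x hx
          rw [abs_sub_le_iff]
          exact ⟨by nlinarith [hx.2, hS.1], by nlinarith [hS.2, hx.1]⟩
        exact factB (X ω) hrb hSr ω hωG
      · exact absurd hN hωN
    · have hωU : ω ∈ ⋃ j ∈ PosJ', S j := by
        by_contra h
        exact hωG h
      simp only [Set.mem_iUnion] at hωU
      obtain ⟨j, hj, hωS⟩ := hωU
      exact (factA j hj ω hωS).trans (by linarith)

/-- For every integrable `X` on a nonatomic probability space there is a
sequence of finite partitions `π n` and `k ≥ 0` with `E[X|π n] → X` a.s. and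
`|E[X|π n]| ≤ |X| + k` a.s. for all `n`. -/
theorem stmt0 (μ : Measure Ω) [IsProbabilityMeasure μ] [NullSingletonClass μ]
    (X : Ω → ℝ) (hX : Integrable X μ) :
    ∃ (π : ℕ → FinPartition μ) (k : ℝ), 0 ≤ k ∧
      (∀ᵐ ω ∂μ, Tendsto (fun n => pCondExp μ (π n) X ω) atTop (nhds (X ω))) ∧
      ∀ n, ∀ᵐ ω ∂μ, |pCondExp μ (π n) X ω| ≤ |X ω| + k := by
  classical
  obtain ⟨X', hX'meas, hXX'⟩ : ∃ X' : Ω → ℝ, Measurable X' ∧ X =ᵐ[μ] X' :=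
    ⟨hX.1.mk X, hX.1.measurable_mk, hX.1.ae_eq_mk⟩
  have hX' : Integrable X' μ := hX.congr hXX'
  have hcex : ∃ c : ℕ, μ {ω | |X' ω| ≤ (c : ℝ)} ≠ 0 := by
    by_contra h
    push_neg at h
    have h1 : μ (⋃ c : ℕ, {ω | |X' ω| ≤ (c : ℝ)}) = 0 := measure_iUnion_null h
    have h2 : (⋃ c : ℕ, {ω | |X' ω| ≤ (c : ℝ)}) = Set.univ := by
      ext ω
      simp only [Set.mem_iUnion, Set.mem_univ, iff_true, Set.mem_setOf_eq]
      exact exists_nat_ge (|X' ω|)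
    rw [h2, measure_univ] at h1
    exact one_ne_zero h1
  obtain ⟨c, hc⟩ := hcex
  choose π N hN h1 h2 using fun n => stmt0_key μ X' hX'meas hX' c hc n
  have hπX : ∀ n ω, pCondExp μ (π n) X ω = pCondExp μ (π n) X' ω := fun n ω =>
    congrFun (pCondExp_congr_ae (π n) hXX') ω
  refine ⟨π, (c : ℝ) + 3, by positivity, ?_, ?_⟩
  · have hNall : μ (⋃ n, N n) = 0 := measure_iUnion_null hN
    filter_upwards [hXX', measure_eq_zero_iff_ae_notMem.mp hNall] with ω hω hωN
    have hsq : Tendsto (fun m : ℕ => (2 : ℝ) * ((2 : ℝ) ^ m)⁻¹) atTop (𝓝 0) := by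
      have h := (tendsto_pow_atTop_nhds_zero_of_lt_one (r := (2 : ℝ)⁻¹) (by norm_num)
        (by norm_num)).const_mul (2 : ℝ)
      simpa [inv_pow] using h
    have hevt : ∀ᶠ m in atTop, ‖pCondExp μ (π m) X ω - X' ω‖ ≤ 2 * ((2 : ℝ) ^ m)⁻¹ := by
      filter_upwards [eventually_ge_atTop ⌈|X' ω|⌉₊] with m hm'
      rw [Real.norm_eq_abs, hπX m ω]
      refine h2 m ω (fun hmem => hωN (Set.mem_iUnion.mpr ⟨m, hmem⟩)) ?_
      exact (Nat.le_ceil _).trans (by exact_mod_cast Nat.cast_le.mpr hm')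
    have hlim := (squeeze_zero_norm' hevt hsq).add_const (X' ω)
    simp only [zero_add, sub_add_cancel] at hlim
    rw [hω]
    exact hlim
  · intro n
    filter_upwards [hXX'] with ω hω
    rw [hπX n ω, hω]
    exact h1 n ω
end

section
/- For every integrable random variable X, every ε ∈ (0, 1/2), and every constant k₁ with P(|X| ≤ k₁) > 1/2, there exists a finite measurable partition π of Ω into sets of positive probability such that ‖E[X|π] − X‖₁ < ε(3 + 2k₁) and |E[X|π]| ≤ |X| + k₁ + 1 almost surely. -/
open MeasureTheory Filter Topology

variable {Ω : Type*} [MeasurableSpace Ω]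

section MyAuxLemmas

variable {Ω : Type*} [MeasurableSpace Ω]

private lemma myPCondExp_eq_on (μ : Measure Ω) (π : FinPartition μ) (X : Ω → ℝ)
    {P : Set Ω} (hP : P ∈ π.parts) {ω : Ω} (hω : ω ∈ P) :
    pCondExp μ π X ω = (∫ x in P, X x ∂μ) / (μ P).toReal := by
  unfold pCondExp
  rw [Finset.sum_eq_single P]
  · rw [Set.indicator_of_mem hω]
  · intro A hA hne
    have hd : Disjoint A P := π.pairwiseDisj A hA P hP hne
    have hωA : ω ∉ A := fun hωA => Set.disjoint_left.mp hd hωA hω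
    rw [Set.indicator_of_notMem hωA]
  · intro h; exact absurd hP h

private lemma myIntegrable_pCondExp (μ : Measure Ω) [IsFiniteMeasure μ]
    (π : FinPartition μ) (X : Ω → ℝ) :
    Integrable (pCondExp μ π X) μ := by
  unfold pCondExp
  apply integrable_finset_sum
  intro A hA
  rw [integrable_indicator_iff (π.measSet A hA)]
  exact integrableOn_const (measure_ne_top μ A)

private lemma myAvg_bounds (μ : Measure Ω) [IsFiniteMeasure μ] (X : Ω → ℝ)
    (hX : Integrable X μ) {P : Set Ω} (hP : MeasurableSet P)
    (hpos : 0 < (μ P).toReal) {a b : ℝ} (hbd : ∀ ω ∈ P, a ≤ X ω ∧ X ω ≤ b) :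
    a ≤ (∫ x in P, X x ∂μ) / (μ P).toReal ∧
      (∫ x in P, X x ∂μ) / (μ P).toReal ≤ b := by
  have hci : ∀ c : ℝ, IntegrableOn (fun _ => c) P μ :=
    fun c => integrableOn_const (measure_ne_top μ P)
  have h1 : ∫ _ in P, a ∂μ ≤ ∫ x in P, X x ∂μ :=
    setIntegral_mono_on (hci a) hX.integrableOn hP (fun ω hω => (hbd ω hω).1)
  have h2 : ∫ x in P, X x ∂μ ≤ ∫ _ in P, b ∂μ :=
    setIntegral_mono_on hX.integrableOn (hci b) hP (fun ω hω => (hbd ω hω).2)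
  rw [setIntegral_const, smul_eq_mul, measureReal_def] at h1 h2
  constructor
  · rw [le_div_iff₀ hpos]; linarith
  · rw [div_le_iff₀ hpos]; linarith

private lemma myTail (μ : Measure Ω) [IsFiniteMeasure μ] (X : Ω → ℝ)
    (hXm : Measurable X) (hX : Integrable X μ) {τ : ℝ} (hτ : 0 < τ) :
    ∃ n : ℕ, ∫ ω in {ω | (n : ℝ) ≤ |X ω|}, |X ω| ∂μ ≤ τ := by
  have hmeas : ∀ n : ℕ, MeasurableSet {ω | (n : ℝ) ≤ |X ω|} :=
    fun n => measurableSet_le measurable_const hXm.abs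
  have h : Tendsto (fun n : ℕ => ∫ ω, Set.indicator {ω | (n : ℝ) ≤ |X ω|} (fun ω => |X ω|) ω ∂μ)
      atTop (nhds (∫ _, (0 : ℝ) ∂μ)) := by
    apply tendsto_integral_of_dominated_convergence (fun ω => |X ω|)
    · exact fun n => ((hXm.abs.indicator (hmeas n))).aestronglyMeasurable
    · exact hX.abs
    · intro n
      apply Filter.Eventually.of_forall
      intro ω
      by_cases hc : ω ∈ {ω | (n : ℝ) ≤ |X ω|}
      · simp [Set.indicator_of_mem hc, Real.norm_eq_abs, abs_abs]
      · simp [Set.indicator_of_notMem hc, abs_nonneg]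
    · apply Filter.Eventually.of_forall
      intro ω
      apply tendsto_const_nhds.congr'
      rw [Filter.eventuallyEq_iff_exists_mem]
      refine ⟨{n : ℕ | ⌊|X ω|⌋₊ + 1 ≤ n}, Filter.mem_atTop _, ?_⟩
      intro n hn
      have hlt : |X ω| < (n : ℝ) := by
        have h1 : |X ω| < (⌊|X ω|⌋₊ : ℝ) + 1 := Nat.lt_floor_add_one _
        have h2 : ((⌊|X ω|⌋₊ + 1 : ℕ) : ℝ) ≤ (n : ℝ) := by exact_mod_cast hn
        push_cast at h2
        linarith
      exact (Set.indicator_of_notMem (by simpa using not_le.mpr hlt) _).symm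
  rw [integral_zero] at h
  obtain ⟨n, hn⟩ := (h.eventually (gt_mem_nhds hτ)).exists
  refine ⟨n, ?_⟩
  rw [← integral_indicator (hmeas n)]
  exact hn.le

end MyAuxLemmas

set_option maxHeartbeats 2000000 in
private lemma myMain {Ω : Type*} [MeasurableSpace Ω] (μ : Measure Ω) [IsProbabilityMeasure μ]
    (X : Ω → ℝ) (hXm : Measurable X) (hX : Integrable X μ)
    (ε : ℝ) (hε0 : 0 < ε) (hε : ε < 1 / 2)
    (k₁ : ℝ) (hk₁ : 1 / 2 < μ {ω | |X ω| ≤ k₁}) :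
    ∃ π : FinPartition μ,
      (∫ ω, |pCondExp μ π X ω - X ω| ∂μ) < ε * (3 + 2 * k₁) ∧
      ∀ᵐ ω ∂μ, |pCondExp μ π X ω| ≤ |X ω| + k₁ + 1 := by
  classical
  set δ : ℝ := ε / 3 with hδdef
  have hδ0 : 0 < δ := by positivity
  have hδ6 : δ < 1 / 6 := by rw [hδdef]; linarith
  have hk₁0 : 0 ≤ k₁ := by
    by_contra h
    push_neg at h
    have hemp : {ω | |X ω| ≤ k₁} = ∅ := by
      ext ω
      simp only [Set.mem_setOf_eq, Set.mem_empty_iff_false, iff_false, not_le]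
      exact lt_of_lt_of_le h (abs_nonneg _)
    rw [hemp, measure_empty] at hk₁
    exact absurd hk₁ (not_lt.2 (zero_le))
  set cell : ℤ → Set Ω := fun j => X ⁻¹' (Set.Ico ((j : ℝ) * δ) (((j : ℝ) + 1) * δ)) with hcelldef
  have hcellm : ∀ j, MeasurableSet (cell j) := fun j => hXm measurableSet_Ico
  have hcellmem : ∀ (j : ℤ) (ω : Ω), ω ∈ cell j ↔ ((j : ℝ) * δ ≤ X ω ∧ X ω < ((j : ℝ) + 1) * δ) := by
    intro j ω
    simp [hcelldef, Set.mem_preimage, Set.mem_Ico]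
  have hcelldisj : ∀ j j' : ℤ, j ≠ j' → Disjoint (cell j) (cell j') := by
    intro j j' hne
    rw [Set.disjoint_left]
    intro ω h1 h2
    rw [hcellmem] at h1 h2
    have hc : ∀ a b : ℤ, (a : ℝ) * δ ≤ X ω → X ω < ((b : ℝ) + 1) * δ → a ≤ b := by
      intro a b ha hb
      have h3 : (a : ℝ) < (b : ℝ) + 1 := lt_of_mul_lt_mul_right (lt_of_le_of_lt ha hb) hδ0.le
      have h4 : (a : ℤ) < b + 1 := by exact_mod_cast h3
      omega
    exact hne (le_antisymm (hc j j' h1.1 h2.2) (hc j' j h2.1 h1.2))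
  -- covering lemma
  have hcover : ∀ (Nn : ℕ) (x : ℝ), -((Nn : ℝ) * δ) ≤ x → x < (Nn : ℝ) * δ →
      ∃ j : ℤ, -(Nn : ℤ) ≤ j ∧ j ≤ (Nn : ℤ) - 1 ∧ (j : ℝ) * δ ≤ x ∧ x < ((j : ℝ) + 1) * δ := by
    intro Nn x h1 h2
    refine ⟨⌊x / δ⌋, ?_, ?_, ?_, ?_⟩
    · rw [Int.le_floor]
      push_cast
      rw [le_div_iff₀ hδ0]
      linarith
    · have hlt : ⌊x / δ⌋ < (Nn : ℤ) := by
        rw [Int.floor_lt]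
        push_cast
        rw [div_lt_iff₀ hδ0]
        linarith
      omega
    · exact (le_div_iff₀ hδ0).mp (Int.floor_le (x / δ))
    · have h5 := Int.lt_floor_add_one (x / δ)
      rw [div_lt_iff₀ hδ0] at h5
      exact h5
  set K : ℕ := ⌊k₁ / δ⌋₊ + 1 with hKdef
  have hKl : k₁ < (K : ℝ) * δ := by
    have h1 : k₁ / δ < (⌊k₁ / δ⌋₊ : ℝ) + 1 := Nat.lt_floor_add_one _
    have h2 : ((K : ℕ) : ℝ) = (⌊k₁ / δ⌋₊ : ℝ) + 1 := by rw [hKdef]; push_cast; ring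
    rw [h2]
    rw [← div_lt_iff₀ hδ0] at *
    linarith
  have hKu : (K : ℝ) * δ ≤ k₁ + δ := by
    have h1 : (⌊k₁ / δ⌋₊ : ℝ) ≤ k₁ / δ := Nat.floor_le (div_nonneg hk₁0 hδ0.le)
    have h2 : ((K : ℕ) : ℝ) = (⌊k₁ / δ⌋₊ : ℝ) + 1 := by rw [hKdef]; push_cast; ring
    rw [h2]
    have h3 : ((⌊k₁ / δ⌋₊ : ℝ) + 1) * δ ≤ (k₁ / δ + 1) * δ := by nlinarith
    have h4 : (k₁ / δ + 1) * δ = k₁ + δ := by field_simp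
    linarith
  -- find a positive cell inside {|X| ≤ k₁}
  have hScov : {ω | |X ω| ≤ k₁} ⊆ ⋃ j ∈ Finset.Icc (-(K : ℤ)) ((K : ℤ) - 1), cell j := by
    intro ω hω
    simp only [Set.mem_setOf_eq] at hω
    obtain ⟨ha, hb⟩ := abs_le.mp hω
    obtain ⟨j, hj1, hj2, hj3, hj4⟩ := hcover K (X ω) (by linarith) (by linarith)
    exact Set.mem_iUnion₂.mpr ⟨j, Finset.mem_Icc.mpr ⟨hj1, hj2⟩, (hcellmem j ω).mpr ⟨hj3, hj4⟩⟩
  have hj₀ex : ∃ j ∈ Finset.Icc (-(K : ℤ)) ((K : ℤ) - 1), 0 < μ (cell j) := by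
    by_contra hcon
    push_neg at hcon
    have hz : μ (⋃ j ∈ Finset.Icc (-(K : ℤ)) ((K : ℤ) - 1), cell j) = 0 := by
      refine le_antisymm ?_ (zero_le)
      calc μ (⋃ j ∈ Finset.Icc (-(K : ℤ)) ((K : ℤ) - 1), cell j)
          ≤ ∑ j ∈ Finset.Icc (-(K : ℤ)) ((K : ℤ) - 1), μ (cell j) := measure_biUnion_finset_le _ _
        _ = 0 := Finset.sum_eq_zero (fun j hj => by exact le_antisymm (hcon j hj) (zero_le))
    have hle := measure_mono (μ := μ) hScov
    rw [hz] at hle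
    exact absurd (lt_of_lt_of_le hk₁ hle) (not_lt.2 (zero_le))
  obtain ⟨j₀, hj₀mem, hj₀pos⟩ := hj₀ex
  set m : ℝ := (μ (cell j₀)).toReal with hmdef
  have hm0 : 0 < m := ENNReal.toReal_pos hj₀pos.ne' (measure_ne_top μ _)
  have hm1 : m ≤ 1 := by
    have h := ENNReal.toReal_mono (measure_ne_top μ Set.univ)
      (measure_mono (Set.subset_univ (cell j₀)))
    rwa [measure_univ, ENNReal.toReal_one] at h
  have hXj₀ : ∀ ω ∈ cell j₀, |X ω| ≤ k₁ + δ := by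
    intro ω hω
    rw [hcellmem] at hω
    obtain ⟨h1, h2⟩ := Finset.mem_Icc.mp hj₀mem
    have hl : -((K : ℝ) * δ) ≤ X ω := by
      have hc : -(K : ℝ) ≤ (j₀ : ℝ) := by exact_mod_cast h1
      have h5 := mul_le_mul_of_nonneg_right hc hδ0.le
      linarith [hω.1]
    have hu : X ω ≤ (K : ℝ) * δ := by
      have hc : ((j₀ : ℝ) + 1) ≤ (K : ℝ) := by exact_mod_cast (by omega : j₀ + 1 ≤ (K : ℤ))
      have : ((j₀ : ℝ) + 1) * δ ≤ (K : ℝ) * δ := mul_le_mul_of_nonneg_right hc hδ0.le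
      linarith [hω.2]
    rw [abs_le]
    constructor <;> linarith [hKu]
  set τ : ℝ := min δ (m * δ) with hτdef
  have hτ0 : 0 < τ := lt_min hδ0 (mul_pos hm0 hδ0)
  have hτδ : τ ≤ δ := min_le_left _ _
  have hτm : τ ≤ m * δ := min_le_right _ _
  obtain ⟨n, hn⟩ := myTail μ X hXm hX hτ0
  set M : ℝ := max (n : ℝ) (k₁ + 1 + δ) with hMdef
  have hMk : k₁ + 1 + δ ≤ M := le_max_right _ _
  have hMn : (n : ℝ) ≤ M := le_max_left _ _
  have hM0 : 0 < M := lt_of_lt_of_le (by linarith) hMk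
  set N : ℕ := K + ⌊M / δ⌋₊ + 1 with hNdef
  have hNM : M < (N : ℝ) * δ := by
    have h1 : M / δ < (⌊M / δ⌋₊ : ℝ) + 1 := Nat.lt_floor_add_one _
    have h2 : (⌊M / δ⌋₊ : ℝ) + 1 ≤ (N : ℝ) := by
      rw [hNdef]
      push_cast
      linarith [Nat.cast_nonneg (α := ℝ) K]
    calc M = (M / δ) * δ := (div_mul_cancel₀ M hδ0.ne').symm
      _ < ((⌊M / δ⌋₊ : ℝ) + 1) * δ := by exact mul_lt_mul_of_pos_right h1 hδ0
      _ ≤ (N : ℝ) * δ := mul_le_mul_of_nonneg_right h2 hδ0.le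
  have hKN : (K : ℤ) ≤ (N : ℤ) := by
    have : K ≤ N := by rw [hNdef]; omega
    exact_mod_cast this
  set F : Finset ℤ := Finset.Icc (-(N : ℤ)) ((N : ℤ) - 1) with hFdef
  have hj₀F : j₀ ∈ F := by
    rw [hFdef, Finset.mem_Icc]
    obtain ⟨h1, h2⟩ := Finset.mem_Icc.mp hj₀mem
    omega
  set U : Set Ω := ⋃ j ∈ F, cell j with hUdef
  have hUm : MeasurableSet U := F.measurableSet_biUnion (fun j _ => hcellm j)
  set B : Set Ω := Uᶜ with hBdef
  have hBm : MeasurableSet B := hUm.compl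
  have hBsub : B ⊆ {ω | M ≤ |X ω|} := by
    intro ω hω
    simp only [Set.mem_setOf_eq]
    by_contra hc
    push_neg at hc
    obtain ⟨ha, hb⟩ := abs_lt.mp (lt_of_lt_of_le hc hNM.le)
    obtain ⟨j, hj1, hj2, hj3, hj4⟩ := hcover N (X ω) (by linarith) hb
    exact hω (Set.mem_iUnion₂.mpr ⟨j, Finset.mem_Icc.mpr ⟨hj1, hj2⟩, (hcellmem j ω).mpr ⟨hj3, hj4⟩⟩)
  have hBn : B ⊆ {ω | (n : ℝ) ≤ |X ω|} := fun ω hω => le_trans hMn (hBsub hω)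
  have hIB : ∫ ω in B, |X ω| ∂μ ≤ τ :=
    le_trans (setIntegral_mono_set hX.abs.integrableOn
      (Filter.Eventually.of_forall (fun ω => abs_nonneg _))
      (HasSubset.Subset.eventuallyLE hBn)) hn
  set b : ℝ := (μ B).toReal with hbdef
  have hb0 : 0 ≤ b := ENNReal.toReal_nonneg
  have hbM : M * b ≤ τ := by
    have h1 : ∫ _ in B, M ∂μ ≤ ∫ ω in B, |X ω| ∂μ :=
      setIntegral_mono_on (integrableOn_const (measure_ne_top μ B))
        hX.abs.integrableOn hBm (fun ω hω => hBsub hω)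
    rw [setIntegral_const, smul_eq_mul] at h1
    have : b * M ≤ τ := le_trans h1 hIB
    linarith
  set J : Finset ℤ := (F.erase j₀).filter (fun j => 0 < μ (cell j)) with hJdef
  have hJF : ∀ j ∈ J, j ∈ F := fun j hj => Finset.mem_of_mem_erase (Finset.mem_filter.mp hj).1
  have hJne : ∀ j ∈ J, j ≠ j₀ := fun j hj => Finset.ne_of_mem_erase (Finset.mem_filter.mp hj).1
  have hJpos : ∀ j ∈ J, 0 < μ (cell j) := fun j hj => (Finset.mem_filter.mp hj).2
  set V : Set Ω := ⋃ j ∈ J, cell j with hVdef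
  have hVm : MeasurableSet V := J.measurableSet_biUnion (fun j _ => hcellm j)
  set C : Set Ω := Vᶜ with hCdef
  have hCm : MeasurableSet C := hVm.compl
  have hj₀C : cell j₀ ⊆ C := by
    intro ω hω hV
    obtain ⟨j, hj, hωj⟩ := Set.mem_iUnion₂.mp hV
    exact Set.disjoint_left.mp (hcelldisj j j₀ (hJne j hj)) hωj hω
  have hBC : B ⊆ C := by
    intro ω hω hV
    obtain ⟨j, hj, hωj⟩ := Set.mem_iUnion₂.mp hV
    exact hω (Set.mem_iUnion₂.mpr ⟨j, hJF j hj, hωj⟩)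
  have hμC : 0 < μ C := lt_of_lt_of_le hj₀pos (measure_mono hj₀C)
  have hCdisj : ∀ j ∈ J, Disjoint C (cell j) := by
    intro j hj
    exact Set.disjoint_left.mpr (fun a haC haj => haC (Set.mem_iUnion₂.mpr ⟨j, hj, haj⟩))
  set parts : Finset (Set Ω) := insert C (J.image cell) with hpartsdef
  have hmemparts : ∀ P ∈ parts, P = C ∨ ∃ j ∈ J, cell j = P := by
    intro P hP
    rcases Finset.mem_insert.mp hP with h | h
    · exact Or.inl h
    · obtain ⟨j, hj, hjP⟩ := Finset.mem_image.mp h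
      exact Or.inr ⟨j, hj, hjP⟩
  have hmeasSet : ∀ A ∈ parts, MeasurableSet A := by
    intro A hA
    rcases hmemparts A hA with h | ⟨j, hj, hjA⟩
    · rw [h]; exact hCm
    · rw [← hjA]; exact hcellm j
  have hdisjparts : ∀ A ∈ parts, ∀ B' ∈ parts, A ≠ B' → Disjoint A B' := by
    intro A hA B' hB' hne
    rcases hmemparts A hA with h1 | ⟨j, hj, hjA⟩ <;> rcases hmemparts B' hB' with h2 | ⟨j', hj', hj'B⟩
    · exact absurd (h1.trans h2.symm) hne
    · rw [h1, ← hj'B]; exact hCdisj j' hj'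
    · rw [← hjA, h2]; exact (hCdisj j hj).symm
    · rw [← hjA, ← hj'B]
      apply hcelldisj
      intro hjj'
      exact hne (by rw [← hjA, ← hj'B, hjj'])
  have hcoverparts : ⋃ A ∈ parts, A = Set.univ := by
    apply Set.eq_univ_of_forall
    intro ω
    by_cases h : ω ∈ V
    · obtain ⟨j, hj, hωj⟩ := Set.mem_iUnion₂.mp h
      exact Set.mem_iUnion₂.mpr
        ⟨cell j, Finset.mem_insert_of_mem (Finset.mem_image_of_mem cell hj), hωj⟩
    · exact Set.mem_iUnion₂.mpr ⟨C, Finset.mem_insert_self _ _, h⟩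
  have hposparts : ∀ A ∈ parts, 0 < μ A := by
    intro A hA
    rcases hmemparts A hA with h | ⟨j, hj, hjA⟩
    · rw [h]; exact hμC
    · rw [← hjA]; exact hJpos j hj
  set π : FinPartition μ := ⟨parts, hmeasSet, hdisjparts, hcoverparts, hposparts⟩ with hπdef
  have hCmem : C ∈ π.parts := Finset.mem_insert_self _ _
  have hcellmem' : ∀ j ∈ J, cell j ∈ π.parts :=
    fun j hj => Finset.mem_insert_of_mem (Finset.mem_image_of_mem cell hj)
  have hvalC : ∀ ω ∈ C, pCondExp μ π X ω = (∫ x in C, X x ∂μ) / (μ C).toReal :=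
    fun ω hω => myPCondExp_eq_on μ π X hCmem hω
  have hvalj : ∀ j ∈ J, ∀ ω ∈ cell j,
      pCondExp μ π X ω = (∫ x in cell j, X x ∂μ) / (μ (cell j)).toReal :=
    fun j hj ω hω => myPCondExp_eq_on μ π X (hcellmem' j hj) hω
  have hcellavg : ∀ j : ℤ, 0 < μ (cell j) →
      ((j : ℝ) * δ ≤ (∫ x in cell j, X x ∂μ) / (μ (cell j)).toReal ∧
        (∫ x in cell j, X x ∂μ) / (μ (cell j)).toReal ≤ ((j : ℝ) + 1) * δ) := by
    intro j hjpos
    apply myAvg_bounds μ X hX (hcellm j) (ENNReal.toReal_pos hjpos.ne' (measure_ne_top μ _))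
    intro ω hω
    rw [hcellmem] at hω
    exact ⟨hω.1, hω.2.le⟩
  have hcellpt : ∀ j : ℤ, 0 < μ (cell j) → ∀ ω ∈ cell j,
      |(∫ x in cell j, X x ∂μ) / (μ (cell j)).toReal - X ω| ≤ δ := by
    intro j hjpos ω hω
    obtain ⟨ha, hb⟩ := hcellavg j hjpos
    rw [hcellmem] at hω
    rw [abs_le]
    constructor <;> linarith [hω.1, hω.2]
  have hPCint : Integrable (pCondExp μ π X) μ := myIntegrable_pCondExp μ π X
  have hg : Integrable (fun ω => |pCondExp μ π X ω - X ω|) μ := (hPCint.sub hX).abs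
  have hsplit : ∫ ω, |pCondExp μ π X ω - X ω| ∂μ =
      (∫ ω in V, |pCondExp μ π X ω - X ω| ∂μ) + ∫ ω in C, |pCondExp μ π X ω - X ω| ∂μ :=
    (integral_add_compl hVm hg).symm
  have hVsum : ∫ ω in V, |pCondExp μ π X ω - X ω| ∂μ =
      ∑ j ∈ J, ∫ ω in cell j, |pCondExp μ π X ω - X ω| ∂μ :=
    integral_biUnion_finset J (fun j _ => hcellm j)
      (fun j _ j' _ hne => hcelldisj j j' hne) (fun j _ => hg.integrableOn)
  have hVbound : ∑ j ∈ J, ∫ ω in cell j, |pCondExp μ π X ω - X ω| ∂μ ≤ δ := by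
    have h1 : ∀ j ∈ J, ∫ ω in cell j, |pCondExp μ π X ω - X ω| ∂μ ≤ δ * (μ (cell j)).toReal := by
      intro j hj
      have hb1 : ∀ ω ∈ cell j, |pCondExp μ π X ω - X ω| ≤ δ := by
        intro ω hω
        rw [hvalj j hj ω hω]
        exact hcellpt j (hJpos j hj) ω hω
      calc ∫ ω in cell j, |pCondExp μ π X ω - X ω| ∂μ ≤ ∫ _ in cell j, δ ∂μ :=
            setIntegral_mono_on hg.integrableOn
              (integrableOn_const (measure_ne_top μ _)) (hcellm j) hb1
        _ = δ * (μ (cell j)).toReal := by rw [setIntegral_const, smul_eq_mul, measureReal_def, mul_comm]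
    calc ∑ j ∈ J, ∫ ω in cell j, |pCondExp μ π X ω - X ω| ∂μ
        ≤ ∑ j ∈ J, δ * (μ (cell j)).toReal := Finset.sum_le_sum h1
      _ = δ * ∑ j ∈ J, (μ (cell j)).toReal := by rw [Finset.mul_sum]
      _ ≤ δ * 1 := by
          apply mul_le_mul_of_nonneg_left ?_ hδ0.le
          have hsum : ∑ j ∈ J, (μ (cell j)).toReal = (μ V).toReal := by
            rw [hVdef, measure_biUnion_finset (fun j _ j' _ hne => hcelldisj j j' hne)
              (fun j _ => hcellm j)]
            exact (ENNReal.toReal_sum (fun j _ => measure_ne_top μ _)).symm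
          rw [hsum]
          have h := ENNReal.toReal_mono (measure_ne_top μ Set.univ)
            (measure_mono (Set.subset_univ V))
          rwa [measure_univ, ENNReal.toReal_one] at h
      _ = δ := mul_one δ
  -- the big part C
  set W : Set Ω := B ∪ cell j₀ with hWdef
  have hWC : W ⊆ C := Set.union_subset hBC hj₀C
  have hdisjBj₀ : Disjoint B (cell j₀) := by
    rw [hBdef]
    exact disjoint_compl_left.mono_right (fun x hx => Set.mem_iUnion₂.mpr ⟨j₀, hj₀F, hx⟩)
  have hnull : μ (C \ W) = 0 := by
    have hsub : C \ W ⊆ ⋃ j ∈ (F.erase j₀).filter (fun j => ¬ 0 < μ (cell j)), cell j := by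
      rintro ω ⟨hωC, hωW⟩
      have hωB : ω ∉ B := fun h => hωW (Or.inl h)
      have hωU : ω ∈ U := Set.not_notMem.mp (fun h => hωB h)
      obtain ⟨j, hjF, hωj⟩ := Set.mem_iUnion₂.mp hωU
      have hjne : j ≠ j₀ := fun h => hωW (Or.inr (h ▸ hωj))
      have hjnJ : j ∉ J := fun h => hωC (Set.mem_iUnion₂.mpr ⟨j, h, hωj⟩)
      have hμj : ¬ 0 < μ (cell j) := fun hpos =>
        hjnJ (Finset.mem_filter.mpr ⟨Finset.mem_erase.mpr ⟨hjne, hjF⟩, hpos⟩)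
      exact Set.mem_iUnion₂.mpr
        ⟨j, Finset.mem_filter.mpr ⟨Finset.mem_erase.mpr ⟨hjne, hjF⟩, hμj⟩, hωj⟩
    refine measure_mono_null hsub ?_
    refine le_antisymm ?_ (zero_le)
    calc μ (⋃ j ∈ (F.erase j₀).filter (fun j => ¬ 0 < μ (cell j)), cell j)
        ≤ ∑ j ∈ (F.erase j₀).filter (fun j => ¬ 0 < μ (cell j)), μ (cell j) :=
          measure_biUnion_finset_le _ _
      _ = 0 := Finset.sum_eq_zero
          (fun j hj => le_zero_iff.mp (not_lt.mp (Finset.mem_filter.mp hj).2))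
  have haeCW : C =ᵐ[μ] W := by
    rw [MeasureTheory.ae_eq_set]
    exact ⟨hnull, by rw [Set.diff_eq_empty.mpr hWC]; exact measure_empty⟩
  have hμCW : μ C = μ W := measure_congr haeCW
  have hmc : (μ C).toReal = b + m := by
    rw [hμCW, hWdef, measure_union hdisjBj₀ (hcellm j₀),
      ENNReal.toReal_add (measure_ne_top μ _) (measure_ne_top μ _)]
  have hmcpos : 0 < (μ C).toReal := by rw [hmc]; linarith
  have hintC : ∫ x in C, X x ∂μ = (∫ x in B, X x ∂μ) + ∫ x in cell j₀, X x ∂μ := by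
    rw [setIntegral_congr_set haeCW, hWdef,
      setIntegral_union hdisjBj₀ (hcellm j₀) hX.integrableOn hX.integrableOn]
  have habsint : ∀ s : Set Ω, |∫ x in s, X x ∂μ| ≤ ∫ x in s, |X x| ∂μ := by
    intro s
    simpa [Real.norm_eq_abs] using norm_integral_le_integral_norm (μ := μ.restrict s) X
  have hIBabs : |∫ x in B, X x ∂μ| ≤ τ := le_trans (habsint B) hIB
  have hI0abs : |∫ x in cell j₀, X x ∂μ| ≤ (k₁ + δ) * m := by
    calc |∫ x in cell j₀, X x ∂μ| ≤ ∫ x in cell j₀, |X x| ∂μ := habsint _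
      _ ≤ ∫ _ in cell j₀, (k₁ + δ) ∂μ :=
          setIntegral_mono_on hX.abs.integrableOn
            (integrableOn_const (measure_ne_top μ _)) (hcellm j₀) hXj₀
      _ = (k₁ + δ) * m := by rw [setIntegral_const, smul_eq_mul, measureReal_def, mul_comm]
  set cC : ℝ := (∫ x in C, X x ∂μ) / (μ C).toReal with hcCdef
  have hcCabs : |cC| ≤ k₁ + 1 := by
    rw [hcCdef, abs_div, abs_of_pos hmcpos, div_le_iff₀ hmcpos]
    have h1 : |∫ x in C, X x ∂μ| ≤ τ + (k₁ + δ) * m := by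
      rw [hintC]
      exact le_trans (abs_add_le _ _) (add_le_add hIBabs hI0abs)
    rw [hmc]
    have h3 : τ + δ * m ≤ m := by
      have hh : (2 * δ) * m ≤ 1 * m :=
        mul_le_mul_of_nonneg_right (by linarith only [hδ6] : 2 * δ ≤ 1) hm0.le
      linarith only [hτm, hh]
    have h4 : 0 ≤ k₁ * b + b := add_nonneg (mul_nonneg hk₁0 hb0) hb0
    linarith only [h1, h3, h4]
  have hptj₀ : ∀ ω ∈ cell j₀, |cC - X ω| ≤ 3 * δ := by
    intro ω hω
    have hXω : |X ω| ≤ k₁ + δ := hXj₀ ω hω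
    have hXc0 : |(∫ x in cell j₀, X x ∂μ) / (μ (cell j₀)).toReal - X ω| ≤ δ :=
      hcellpt j₀ hj₀pos ω hω
    set c0 : ℝ := (∫ x in cell j₀, X x ∂μ) / (μ (cell j₀)).toReal with hc0def
    have hc0m : ∫ x in cell j₀, X x ∂μ = c0 * m := by
      rw [hc0def, hmdef]
      exact (div_mul_cancel₀ _ (ENNReal.toReal_pos hj₀pos.ne' (measure_ne_top μ _)).ne').symm
    have hbm : b + m ≠ 0 := ne_of_gt (by linarith only [hb0, hm0] : (0:ℝ) < b + m)
    have heq : cC - X ω =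
        ((c0 - X ω) * m + ((∫ x in B, X x ∂μ) - X ω * b)) / (μ C).toReal := by
      rw [hcCdef, hintC, hc0m, hmc]
      field_simp
      ring
    rw [heq, abs_div, abs_of_pos hmcpos, div_le_iff₀ hmcpos]
    have hnum : |(c0 - X ω) * m + ((∫ x in B, X x ∂μ) - X ω * b)| ≤
        δ * m + (τ + (k₁ + δ) * b) := by
      calc |(c0 - X ω) * m + ((∫ x in B, X x ∂μ) - X ω * b)|
          ≤ |(c0 - X ω) * m| + |(∫ x in B, X x ∂μ) - X ω * b| := abs_add_le _ _
        _ ≤ δ * m + (τ + (k₁ + δ) * b) := by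
            apply add_le_add
            · rw [abs_mul, abs_of_nonneg hm0.le]
              exact mul_le_mul_of_nonneg_right hXc0 hm0.le
            · calc |(∫ x in B, X x ∂μ) - X ω * b|
                  ≤ |∫ x in B, X x ∂μ| + |X ω * b| := abs_sub _ _
                _ ≤ τ + (k₁ + δ) * b := add_le_add hIBabs
                    (by rw [abs_mul, abs_of_nonneg hb0]
                        exact mul_le_mul_of_nonneg_right hXω hb0)
    have hkb : (k₁ + δ) * b ≤ τ :=
      le_trans (mul_le_mul_of_nonneg_right (by linarith : k₁ + δ ≤ M) hb0) hbM
    rw [hmc]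
    have h7 : 0 ≤ δ * b := mul_nonneg hδ0.le hb0
    linarith only [hnum, hkb, hτm, h7]
  have hgC : Integrable (fun ω => |cC - X ω|) μ := ((integrable_const cC).sub hX).abs
  have hCbound : ∫ ω in C, |pCondExp μ π X ω - X ω| ∂μ ≤ 5 * δ := by
    have h1 : ∫ ω in C, |pCondExp μ π X ω - X ω| ∂μ = ∫ ω in C, |cC - X ω| ∂μ :=
      setIntegral_congr_fun hCm (fun ω hω => by rw [hvalC ω hω, hcCdef])
    rw [h1, setIntegral_congr_set haeCW, hWdef,
      setIntegral_union hdisjBj₀ (hcellm j₀) hgC.integrableOn hgC.integrableOn]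
    have hB1 : ∫ ω in B, |cC - X ω| ∂μ ≤ (k₁ + 1) * b + τ := by
      have hstep : ∫ ω in B, |cC - X ω| ∂μ ≤ ∫ ω in B, ((k₁ + 1) + |X ω|) ∂μ := by
        apply setIntegral_mono_on hgC.integrableOn
          (((integrable_const _).add hX.abs).integrableOn) hBm
        intro ω hω
        calc |cC - X ω| ≤ |cC| + |X ω| := abs_sub _ _
          _ ≤ (k₁ + 1) + |X ω| := by linarith [hcCabs]
      have hadd : ∫ ω in B, ((k₁ + 1) + |X ω|) ∂μ = (k₁ + 1) * b + ∫ ω in B, |X ω| ∂μ := by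
        rw [integral_add ((integrable_const _).integrableOn) hX.abs.integrableOn,
          setIntegral_const, smul_eq_mul, measureReal_def, mul_comm]
      linarith [hIB]
    have hj₀1 : ∫ ω in cell j₀, |cC - X ω| ∂μ ≤ 3 * δ * m := by
      calc ∫ ω in cell j₀, |cC - X ω| ∂μ ≤ ∫ _ in cell j₀, 3 * δ ∂μ :=
            setIntegral_mono_on hgC.integrableOn
              (integrableOn_const (measure_ne_top μ _)) (hcellm j₀) hptj₀
        _ = 3 * δ * m := by rw [setIntegral_const, smul_eq_mul, measureReal_def, mul_comm]
    have hkb1 : (k₁ + 1) * b ≤ τ :=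
      le_trans (mul_le_mul_of_nonneg_right (by linarith : k₁ + 1 ≤ M) hb0) hbM
    have h8 : 3 * δ * m ≤ 3 * δ := mul_le_of_le_one_right (by positivity) hm1
    linarith only [hB1, hj₀1, hkb1, hτδ, h8]
  refine ⟨π, ?_, ?_⟩
  · have hV' : ∫ ω in V, |pCondExp μ π X ω - X ω| ∂μ ≤ δ := by rw [hVsum]; exact hVbound
    have htot : ∫ ω, |pCondExp μ π X ω - X ω| ∂μ ≤ 6 * δ := by
      rw [hsplit]; linarith [hCbound]
    have h6 : 6 * δ = 2 * ε := by rw [hδdef]; ring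
    have h9 : 0 ≤ ε * k₁ := mul_nonneg hε0.le hk₁0
    linarith only [htot, h6, h9, hε0]
  · apply Filter.Eventually.of_forall
    intro ω
    by_cases hωV : ω ∈ V
    · obtain ⟨j, hj, hωj⟩ := Set.mem_iUnion₂.mp hωV
      rw [hvalj j hj ω hωj]
      have h := hcellpt j (hJpos j hj) ω hωj
      have habs := abs_add_le ((∫ x in cell j, X x ∂μ) / (μ (cell j)).toReal - X ω) (X ω)
      rw [sub_add_cancel] at habs
      linarith only [h, habs, hδ6, hk₁0]
    · rw [hvalC ω hωV]
      linarith only [abs_nonneg (X ω), hcCabs]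

/-- For every integrable `X`, `ε ∈ (0,1/2)` and `k₁` with `P(|X| ≤ k₁) > 1/2`,
there is a finite partition `π` with `‖E[X|π] - X‖₁ < ε(3 + 2k₁)` and
`|E[X|π]| ≤ |X| + k₁ + 1` a.s. -/
theorem stmt1 (μ : Measure Ω) [IsProbabilityMeasure μ] [NullSingletonClass μ]
    (X : Ω → ℝ) (hX : Integrable X μ)
    (ε : ℝ) (hε0 : 0 < ε) (hε : ε < 1 / 2)
    (k₁ : ℝ) (hk₁ : 1 / 2 < μ {ω | |X ω| ≤ k₁}) :
    ∃ π : FinPartition μ,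
      (∫ ω, |pCondExp μ π X ω - X ω| ∂μ) < ε * (3 + 2 * k₁) ∧
      ∀ᵐ ω ∂μ, |pCondExp μ π X ω| ≤ |X ω| + k₁ + 1 := by
  obtain ⟨X', hX'meas, hXX'⟩ : ∃ X', Measurable X' ∧ X =ᵐ[μ] X' :=
    ⟨hX.1.mk X, hX.1.stronglyMeasurable_mk.measurable, hX.1.ae_eq_mk⟩
  have hX' : Integrable X' μ := hX.congr hXX'
  have hset : μ {ω | |X' ω| ≤ k₁} = μ {ω | |X ω| ≤ k₁} := by
    apply measure_congr
    filter_upwards [hXX'] with ω hω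
    change (|X' ω| ≤ k₁) = (|X ω| ≤ k₁)
    rw [hω]
  obtain ⟨π, h1, h2⟩ := myMain μ X' hX'meas hX' ε hε0 hε k₁ (by rwa [hset])
  have hPC : pCondExp μ π X = pCondExp μ π X' := by
    funext ω
    unfold pCondExp
    apply Finset.sum_congr rfl
    intro A hA
    have hAint : (∫ x in A, X x ∂μ) = ∫ x in A, X' x ∂μ :=
      integral_congr_ae (ae_restrict_of_ae hXX')
    rw [hAint]
  refine ⟨π, ?_, ?_⟩
  · calc (∫ ω, |pCondExp μ π X ω - X ω| ∂μ)
        = ∫ ω, |pCondExp μ π X' ω - X' ω| ∂μ := by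
          rw [hPC]
          apply integral_congr_ae
          filter_upwards [hXX'] with ω hω
          rw [hω]
      _ < ε * (3 + 2 * k₁) := h1
  · filter_upwards [h2, hXX'] with ω hω hω'
    rw [hPC, hω']
    exact hω
end

section
/- Let 𝓧 ⊆ L¹ contain all simple random variables and let ρ: 𝓧 → [−∞, ∞] be dilatation monotone with the Fatou property. Then for every X ∈ 𝓧, ρ(X) = sup over finite partitions π ∈ Π of ρ(E[X|π]). -/
/-!
Dilatation monotonicity gives `ρ (E[X|π]) ≤ ρ X`. Conversely, by the Fatou property it suffices to
find partitions `πₙ` with `E[X|πₙ] → X` a.s. and `|E[X|πₙ]| ≤ |X| + B`. Cut `Ω` into the level sets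
of `X` over a grid of mesh `δ` inside a large window `[-Mδ, Mδ)`: on each such cell of positive
measure, `E[X|π]` stays within `δ` of `X`. Everything else (the tail outside the window and the null
cells) is merged with one cell `C₀` of positive measure on which `|X| ≤ B + δ`. If the window is so
large that `∫ (|X| + B + δ)` over the tail is at most `δ μ(C₀)`, then the average over the merged
part stays within `δ` of the average over `C₀`.
-/

open MeasureTheory Filter Topology

variable {Ω : Type*} [MeasurableSpace Ω]

namespace FinPartition

variable {μ : Measure Ω}

noncomputable def ofDisjoint (G : Finset (Set Ω)) (hmeas : ∀ A ∈ G, MeasurableSet A)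
    (hdisj : (G : Set (Set Ω)).PairwiseDisjoint id) (hpos : ∀ A ∈ G, 0 < μ A)
    (hrest : 0 < μ (⋃ A ∈ G, A)ᶜ) : FinPartition μ where
  parts := insert (⋃ A ∈ G, A)ᶜ G
  measSet := Finset.forall_mem_insert _ _ _ |>.2
    ⟨(Finset.measurableSet_biUnion G hmeas).compl, hmeas⟩
  pairwiseDisj := by
    have hrest_disj : ∀ B ∈ G, Disjoint (⋃ A ∈ G, A)ᶜ B := fun B hB =>
      disjoint_compl_left.mono_right (Set.subset_biUnion_of_mem (u := id) hB)
    intro A hA B hB hAB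
    rcases Finset.mem_insert.1 hA with rfl | hA <;> rcases Finset.mem_insert.1 hB with rfl | hB
    · exact absurd rfl hAB
    · exact hrest_disj B hB
    · exact (hrest_disj A hA).symm
    · exact hdisj hA hB hAB
  cover := by rw [Finset.set_biUnion_insert, Set.compl_union_self]
  pos := Finset.forall_mem_insert _ _ _ |>.2 ⟨hrest, hpos⟩

lemma exists_mem_parts (π : FinPartition μ) (ω : Ω) : ∃ A ∈ π.parts, ω ∈ A := by
  have hω : ω ∈ ⋃ A ∈ π.parts, A := π.cover ▸ Set.mem_univ ω
  simpa only [Set.mem_iUnion, exists_prop] using hω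

end FinPartition

section pCondExp

variable {μ : Measure Ω}

lemma pCondExp_eq_setAverage (π : FinPartition μ) (X : Ω → ℝ) {A : Set Ω}
    (hA : A ∈ π.parts) {ω : Ω} (hω : ω ∈ A) : pCondExp μ π X ω = ⨍ x in A, X x ∂μ := by
  rw [setAverage_eq, smul_eq_mul, pCondExp, Finset.sum_eq_single_of_mem A hA,
    Set.indicator_of_mem hω, Measure.real, div_eq_inv_mul]
  intro B hB hBA
  exact Set.indicator_of_notMem
    (fun hωB => Set.disjoint_left.1 (π.pairwiseDisj B hB A hA hBA) hωB hω) _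

lemma isSimpleRV_pCondExp (π : FinPartition μ) (X : Ω → ℝ) :
    IsSimpleRV (pCondExp μ π X) := by
  refine ⟨Finset.measurable_sum _ fun A hA => measurable_const.indicator (π.measSet A hA), ?_⟩
  refine (π.parts.image fun A => ⨍ x in A, X x ∂μ).finite_toSet.subset ?_
  rintro _ ⟨ω, rfl⟩
  obtain ⟨A, hA, hω⟩ := π.exists_mem_parts ω
  rw [pCondExp_eq_setAverage π X hA hω]
  exact Finset.mem_coe.2 (Finset.mem_image_of_mem _ hA)

end pCondExp

lemma isSimpleRV_const (c : ℝ) : IsSimpleRV fun _ : Ω => c :=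
  ⟨measurable_const, Set.finite_range_const⟩

lemma memIdeal_abs_add_const {μ : Measure Ω} {S : Set (Ω → ℝ)} {X : Ω → ℝ} (hX : X ∈ S)
    (h1 : (fun _ => 1) ∈ S) {B : ℝ} (hB : 0 ≤ B) : MemIdeal μ S fun ω => |X ω| + B :=
  ⟨2, ![X, fun _ => 1], ![1, B], by simp [Fin.forall_fin_two, hX, h1],
    by simp [Fin.forall_fin_two, hB],
    Eventually.of_forall fun ω => by
      simp [Fin.sum_univ_two, abs_of_nonneg (add_nonneg (abs_nonneg (X ω)) hB)]⟩

section setAverage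

variable {μ : Measure Ω} [IsFiniteMeasure μ] {X : Ω → ℝ} {C P : Set Ω}

lemma abs_setAverage_sub_le_of_forall_mem_Icc (hC : MeasurableSet C) (hμC : μ C ≠ 0)
    (hint : IntegrableOn X C μ) {a δ : ℝ} (hX : ∀ ω ∈ C, X ω ∈ Set.Icc a (a + δ)) {ω : Ω}
    (hω : ω ∈ C) : |⨍ x in C, X x ∂μ - X ω| ≤ δ := by
  have havg : ⨍ x in C, X x ∂μ ∈ Set.Icc a (a + δ) :=
    (convex_Icc _ _).set_average_mem isClosed_Icc hμC (measure_ne_top μ C)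
      ((ae_restrict_iff' hC).2 (Eventually.of_forall hX)) hint
  have hXω := hX ω hω
  rw [abs_sub_le_iff]
  constructor <;> linarith [havg.1, havg.2, hXω.1, hXω.2]

lemma abs_setAverage_sub_setAverage_le (hC : MeasurableSet C) (hCP : C ⊆ P) (hμC : μ C ≠ 0)
    (hint : Integrable X μ) {T : Set Ω} (hT : P \ C ≤ᵐ[μ] T) {b : ℝ}
    (hb : |⨍ x in C, X x ∂μ| ≤ b) :
    |⨍ x in P, X x ∂μ - ⨍ x in C, X x ∂μ| ≤ (∫ x in T, |X x| + b ∂μ) / μ.real C := by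
  set a := ⨍ y in C, X y ∂μ
  have hm : 0 < μ.real C := ENNReal.toReal_pos hμC (measure_ne_top μ C)
  have hp : 0 < μ.real P := hm.trans_le (measureReal_mono hCP)
  have hint_a : Integrable (fun x => X x - a) μ := hint.sub (integrable_const a)
  have hint_b : Integrable (fun x => |X x| + b) μ := hint.abs.add (integrable_const b)
  have hsplit : ∫ x in P, X x - a ∂μ = ∫ x in P \ C, X x - a ∂μ := by
    rw [← integral_inter_add_sdiff hC hint_a.integrableOn, Set.inter_eq_right.2 hCP,
      setAverage_sub_setAverage (measure_ne_top μ C), zero_add]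
  have hdiff : ⨍ x in P, X x ∂μ - a = (μ.real P)⁻¹ * ∫ x in P \ C, X x - a ∂μ := by
    rw [← hsplit, integral_sub hint.integrableOn (integrable_const a), setIntegral_const,
      setAverage_eq, smul_eq_mul, smul_eq_mul, mul_sub, inv_mul_cancel_left₀ hp.ne']
  rw [hdiff, abs_mul, abs_inv, abs_of_pos hp, inv_mul_eq_div]
  calc |∫ x in P \ C, X x - a ∂μ| / μ.real P
      ≤ (∫ x in P \ C, |X x - a| ∂μ) / μ.real P := by
        gcongr; exact abs_integral_le_integral_abs
    _ ≤ (∫ x in P \ C, |X x| + b ∂μ) / μ.real C := by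
        gcongr ?_ / ?_
        · exact integral_nonneg fun _ => add_nonneg (abs_nonneg _) ((abs_nonneg a).trans hb)
        · exact setIntegral_mono hint_a.abs.integrableOn hint_b.integrableOn
            fun x => by linarith [abs_sub (X x) a]
        · exact measureReal_mono hCP
    _ ≤ (∫ x in T, |X x| + b ∂μ) / μ.real C := by
        gcongr ?_ / _
        exact setIntegral_mono_set hint_b.integrableOn
          (Eventually.of_forall fun x => add_nonneg (abs_nonneg _) ((abs_nonneg a).trans hb)) hT

end setAverage

section fibers

variable {μ : Measure Ω} {ι : Type*}

lemma ae_measure_fiber_ne_zero [Countable ι] [MeasurableSpace ι] [MeasurableSingletonClass ι]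
    {q : Ω → ι} (hq : Measurable q) : ∀ᵐ ω ∂μ, μ (q ⁻¹' {q ω}) ≠ 0 := by
  have h : ∀ᵐ k ∂μ.map q, μ.map q {k} ≠ 0 := ae_iff_of_countable.2 fun _ hk => hk
  filter_upwards [ae_of_ae_map hq.aemeasurable h] with ω hω
  rwa [Measure.map_apply hq (measurableSet_singleton _)] at hω

lemma exists_finPartition_fibers {q : Ω → ι}
    (hq : ∀ k, MeasurableSet (q ⁻¹' {k})) (I : Finset ι) {k₀ : ι} (hk₀ : μ (q ⁻¹' {k₀}) ≠ 0) :
    ∃ π : FinPartition μ, ∃ P, q ⁻¹' {k₀} ⊆ P ∧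
      (∀ ω ∈ P, q ω ∈ I → q ω ≠ k₀ → μ (q ⁻¹' {q ω}) = 0) ∧
      ∀ X ω, (μ (q ⁻¹' {q ω}) ≠ 0 ∧ pCondExp μ π X ω = ⨍ x in q ⁻¹' {q ω}, X x ∂μ) ∨
        (ω ∈ P ∧ pCondExp μ π X ω = ⨍ x in P, X x ∂μ) := by
  classical
  set G := ((I.erase k₀).filter fun k => μ (q ⁻¹' {k}) ≠ 0).image fun k => q ⁻¹' {k}
  have hG : ∀ A ∈ G, ∃ k ≠ k₀, k ∈ I ∧ μ (q ⁻¹' {k}) ≠ 0 ∧ q ⁻¹' {k} = A := by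
    simp only [G, Finset.mem_image, Finset.mem_filter, Finset.mem_erase]
    rintro A ⟨k, ⟨⟨hk, hkI⟩, hμ⟩, rfl⟩
    exact ⟨k, hk, hkI, hμ, rfl⟩
  have hC₀ : q ⁻¹' {k₀} ⊆ (⋃ A ∈ G, A)ᶜ := by
    intro ω hω hωG
    obtain ⟨A, hA, hωA⟩ := Set.mem_iUnion₂.1 hωG
    obtain ⟨k, hk, -, -, rfl⟩ := hG A hA
    exact hk ((Set.mem_singleton_iff.1 hωA).symm.trans hω)
  let π : FinPartition μ := FinPartition.ofDisjoint G
    (fun A hA => by obtain ⟨k, -, -, -, rfl⟩ := hG A hA; exact hq k)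
    (fun A hA B hB hAB => by
      obtain ⟨k, -, -, -, rfl⟩ := hG A hA
      obtain ⟨l, -, -, -, rfl⟩ := hG B hB
      exact Set.disjoint_singleton.2 (fun hkl => hAB (by rw [hkl])) |>.preimage q)
    (fun A hA => by obtain ⟨k, -, -, hk, rfl⟩ := hG A hA; exact pos_iff_ne_zero.2 hk)
    (pos_iff_ne_zero.2 fun h => hk₀ (measure_mono_null hC₀ h))
  refine ⟨π, _, hC₀, fun ω hω hI hk => ?_, fun X ω => ?_⟩
  · by_contra hμ
    refine hω (Set.mem_iUnion₂.2 ⟨q ⁻¹' {q ω}, ?_, rfl⟩)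
    exact Finset.mem_image_of_mem _ (Finset.mem_filter.2 ⟨Finset.mem_erase.2 ⟨hk, hI⟩, hμ⟩)
  · obtain ⟨A, hA, hωA⟩ := π.exists_mem_parts ω
    have hE := pCondExp_eq_setAverage π X hA hωA
    rcases Finset.mem_insert.1 hA with rfl | hAG
    · exact Or.inr ⟨hωA, hE⟩
    · obtain ⟨k, -, -, hk, rfl⟩ := hG A hAG
      have hqω : q ω = k := hωA
      exact Or.inl (hqω ▸ ⟨hk, hE⟩)

end fibers

lemma mem_Icc_of_floor_div_eq {x δ : ℝ} (hδ : 0 < δ) {k : ℤ} (h : ⌊x / δ⌋ = k) :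
    x ∈ Set.Icc (k * δ) (k * δ + δ) := by
  obtain ⟨h₁, h₂⟩ := Int.floor_eq_iff.1 h
  rw [le_div_iff₀ hδ] at h₁
  rw [div_lt_iff₀ hδ] at h₂
  exact ⟨h₁, by linarith⟩

lemma floor_div_mem_Ico {x δ r : ℝ} {M : ℕ} (hδ : 0 < δ) (hx : |x| < r) (hM : r / δ ≤ M) :
    ⌊x / δ⌋ ∈ Finset.Ico (-M : ℤ) M := by
  rw [abs_lt] at hx
  rw [div_le_iff₀ hδ] at hM
  refine Finset.mem_Ico.2 ⟨Int.le_floor.2 ?_, Int.floor_lt.2 ?_⟩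
  · rw [le_div_iff₀ hδ]; push_cast; linarith
  · rw [div_lt_iff₀ hδ]; push_cast; linarith

lemma le_abs_div_of_floor_div_notMem_Ico {x δ : ℝ} {M : ℕ} (hδ : 0 < δ)
    (h : ⌊x / δ⌋ ∉ Finset.Ico (-M : ℤ) M) : (M : ℝ) ≤ |x| / δ := by
  rw [Finset.mem_Ico, not_and_or, not_le, not_lt, Int.floor_lt, Int.le_floor,
    div_lt_iff₀ hδ, le_div_iff₀ hδ] at h
  rw [le_div_iff₀ hδ, le_abs']
  push_cast at h
  exact h.imp_left fun h => by linarith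

section approximation

variable {μ : Measure Ω}

lemma exists_nat_ge_setIntegral_le {f g : Ω → ℝ} (hf : Measurable f) (hg : Integrable g μ)
    (r : ℝ) {ε : ℝ} (hε : 0 < ε) : ∃ M : ℕ, r ≤ M ∧ ∫ ω in {ω | (M : ℝ) ≤ f ω}, g ω ∂μ ≤ ε := by
  have hempty : (⋂ c : ℕ, {ω | (c : ℝ) ≤ f ω}) = ∅ :=
    Set.eq_empty_of_forall_notMem fun ω hω => by
      obtain ⟨c, hc⟩ := exists_nat_gt (f ω)
      exact (Set.mem_iInter.1 hω c).not_gt hc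
  have htendsto : Tendsto (fun c : ℕ => ∫ ω in {ω | (c : ℝ) ≤ f ω}, g ω ∂μ) atTop (𝓝 0) := by
    simpa [hempty] using tendsto_setIntegral_of_antitone
      (fun c => measurableSet_le measurable_const hf)
      (fun _ _ hcd _ hω => (Nat.cast_le.2 hcd).trans (Set.mem_ofPred.1 hω)) ⟨0, hg.integrableOn⟩
  exact ((tendsto_natCast_atTop_atTop.eventually_ge_atTop r).and
    (htendsto.eventually (ge_mem_nhds hε))).exists

lemma exists_pCondExp_approx [IsFiniteMeasure μ] {X : Ω → ℝ} (hX : Measurable X)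
    (hint : Integrable X μ) {B δ r : ℝ} (hδ : 0 < δ) (hB : μ {ω | |X ω| ≤ B} ≠ 0) :
    ∃ π : FinPartition μ, (∀ ω, |pCondExp μ π X ω| ≤ |X ω| + B + 2 * δ) ∧
      ∀ᵐ ω ∂μ, |X ω| < r → |pCondExp μ π X ω - X ω| ≤ 2 * δ := by
  set q : Ω → ℤ := fun ω => ⌊X ω / δ⌋
  have hq : Measurable q := (hX.div_const δ).floor
  have hq_fiber := ae_measure_fiber_ne_zero (μ := μ) hq
  have hcell : ∀ ω, μ (q ⁻¹' {q ω}) ≠ 0 → |⨍ x in q ⁻¹' {q ω}, X x ∂μ - X ω| ≤ δ :=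
    fun ω hμ => abs_setAverage_sub_le_of_forall_mem_Icc (hq (measurableSet_singleton _)) hμ
      hint.integrableOn (fun _ h => mem_Icc_of_floor_div_eq hδ h) rfl
  obtain ⟨ω₀, hω₀B, hμ₀⟩ : ∃ ω₀, |X ω₀| ≤ B ∧ μ (q ⁻¹' {q ω₀}) ≠ 0 :=
    ((frequently_ae_iff.2 hB).and_eventually hq_fiber).exists
  have hB₀ : 0 ≤ B := (abs_nonneg _).trans hω₀B
  set C₀ := q ⁻¹' {q ω₀}
  set a := ⨍ x in C₀, X x ∂μ
  have ha : |a| ≤ B + δ := by linarith [hcell ω₀ hμ₀, abs_sub_abs_le_abs_sub a (X ω₀)]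
  have hm : 0 < μ.real C₀ := ENNReal.toReal_pos hμ₀ (measure_ne_top μ C₀)
  obtain ⟨M, hMr, hMtail⟩ := exists_nat_ge_setIntegral_le (hX.abs.div_const δ)
    (hint.abs.add (integrable_const (B + δ))) (r / δ) (mul_pos hδ hm)
  obtain ⟨π, P, hC₀P, hP_null, hvalue⟩ :=
    exists_finPartition_fibers (fun k => hq (measurableSet_singleton k))
      (Finset.Ico (-M : ℤ) M) hμ₀
  have hP_tail : P \ C₀ ≤ᵐ[μ] {ω | (M : ℝ) ≤ |X ω| / δ} := by
    filter_upwards [hq_fiber] with ω hω ⟨hωP, hωC₀⟩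
    exact le_abs_div_of_floor_div_notMem_Ico hδ fun hωI => hω (hP_null ω hωP hωI hωC₀)
  have hP_avg : |⨍ x in P, X x ∂μ - a| ≤ δ :=
    (abs_setAverage_sub_setAverage_le (hq (measurableSet_singleton _)) hC₀P hμ₀ hint hP_tail
      ha).trans ((div_le_iff₀ hm).2 hMtail)
  refine ⟨π, fun ω => ?_, ?_⟩
  · rcases hvalue X ω with ⟨hμ, hE⟩ | ⟨-, hE⟩ <;> rw [hE]
    · linarith [hcell ω hμ, abs_sub_abs_le_abs_sub (⨍ x in q ⁻¹' {q ω}, X x ∂μ) (X ω)]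
    · linarith [abs_sub_abs_le_abs_sub (⨍ x in P, X x ∂μ) a, abs_nonneg (X ω)]
  · filter_upwards [hq_fiber] with ω hω hωr
    rcases hvalue X ω with ⟨hμ, hE⟩ | ⟨hωP, hE⟩ <;> rw [hE]
    · linarith [hcell ω hμ]
    · have hωC₀ : q ω = q ω₀ :=
        by_contra fun h => hω (hP_null ω hωP (floor_div_mem_Ico hδ hωr hMr) h)
      have hXa := hcell ω hω
      rw [hωC₀] at hXa
      linarith [abs_sub_le (⨍ x in P, X x ∂μ) a (X ω)]

lemma exists_pCondExp_tendsto [IsFiniteMeasure μ] [NeZero μ] {X : Ω → ℝ}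
    (hint : Integrable X μ) :
    ∃ (π : ℕ → FinPartition μ) (B : ℝ), 0 ≤ B ∧
      (∀ᵐ ω ∂μ, ∀ n, |pCondExp μ (π n) X ω| ≤ |X ω| + B) ∧
      ∀ᵐ ω ∂μ, Tendsto (fun n => pCondExp μ (π n) X ω) atTop (𝓝 (X ω)) := by
  set X' := hint.aemeasurable.mk X
  have hX' : Measurable X' := hint.aemeasurable.measurable_mk
  have hXX' : X =ᵐ[μ] X' := hint.aemeasurable.ae_eq_mk
  obtain ⟨K, hK⟩ : ∃ K : ℕ, μ {ω | |X' ω| ≤ K} ≠ 0 := by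
    refine (exists_measure_pos_of_not_measure_iUnion_null ?_).imp fun _ h => h.ne'
    have hcover : (⋃ K : ℕ, {ω | |X' ω| ≤ K}) = Set.univ :=
      Set.iUnion_eq_univ_iff.2 fun ω => exists_nat_ge |X' ω|
    rw [hcover]
    exact NeZero.ne (μ Set.univ)
  choose π hdom hconv using fun n : ℕ => exists_pCondExp_approx hX' (hint.congr hXX') (r := n)
    (Nat.one_div_pos_of_nat (n := n)) hK
  simp only [pCondExp_congr_ae _ hXX']
  refine ⟨π, K + 2, by positivity, ?_, ?_⟩
  · filter_upwards [hXX'] with ω hω n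
    have : 1 / ((n : ℝ) + 1) ≤ 1 :=
      div_le_one_of_le₀ (by linarith [n.cast_nonneg (α := ℝ)]) (by positivity)
    rw [hω]
    linarith [hdom n ω]
  · filter_upwards [hXX', ae_all_iff.2 hconv] with ω hω hω_conv
    rw [hω, tendsto_iff_norm_sub_tendsto_zero]
    refine squeeze_zero' (g := fun n : ℕ => 2 * (1 / ((n : ℝ) + 1)))
      (Eventually.of_forall fun n => norm_nonneg _) ?_
      (by simpa using tendsto_one_div_add_atTop_nhds_zero_nat.const_mul (2 : ℝ))
    obtain ⟨N, hN⟩ := exists_nat_gt |X' ω|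
    filter_upwards [eventually_ge_atTop N] with n hn
    exact hω_conv n (hN.trans_le (Nat.cast_le.2 hn))

end approximation

theorem stmt4_general (μ : Measure Ω) [IsProbabilityMeasure μ]
    (𝓧 : Set (Ω → ℝ)) (h𝓧L1 : ∀ X ∈ 𝓧, Integrable X μ)
    (h𝓛 : ∀ Z : Ω → ℝ, IsSimpleRV Z → Z ∈ 𝓧)
    (ρ : (Ω → ℝ) → EReal)
    (hdil : DilMono μ 𝓧 ρ) (hFatou : FatouProp μ 𝓧 ρ) :
    ∀ X ∈ 𝓧, ρ X = ⨆ π : FinPartition μ, ρ (pCondExp μ π X) := by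
  intro X hX
  refine le_antisymm ?_ (iSup_le (hdil X hX))
  obtain ⟨π, B, hB, hdom, htendsto⟩ := exists_pCondExp_tendsto (h𝓧L1 X hX)
  have hideal : MemIdeal μ 𝓧 fun ω => |X ω| + B :=
    memIdeal_abs_add_const hX (h𝓛 _ (isSimpleRV_const 1)) hB
  calc ρ X ≤ liminf (fun n => ρ (pCondExp μ (π n) X)) atTop :=
        hFatou _ X (fun n => h𝓛 _ (isSimpleRV_pCondExp _ X)) hX htendsto ⟨_, hideal, hdom⟩
    _ ≤ ⨆ π, ρ (pCondExp μ π X) :=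
        liminf_le_of_frequently_le' (Frequently.of_forall fun n => le_iSup_of_le (π n) le_rfl)

/-- If `ρ` on `𝓧 ⊇ 𝓛` is dilatation monotone with the Fatou property, then
`ρ(X) = sup_{π ∈ Π} ρ(E[X|π])` for every `X ∈ 𝓧`. -/
theorem stmt4 (μ : Measure Ω) [IsProbabilityMeasure μ] [NullSingletonClass μ]
    (𝓧 : Set (Ω → ℝ)) (h𝓧L1 : ∀ X ∈ 𝓧, Integrable X μ)
    (h𝓛 : ∀ Z : Ω → ℝ, IsSimpleRV Z → Z ∈ 𝓧)
    (ρ : (Ω → ℝ) → EReal)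
    (hdil : DilMono μ 𝓧 ρ) (hFatou : FatouProp μ 𝓧 ρ) :
    ∀ X ∈ 𝓧, ρ X = ⨆ π : FinPartition μ, ρ (pCondExp μ π X) :=
  stmt4_general μ 𝓧 h𝓧L1 h𝓛 ρ hdil hFatou
end
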